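/- arXiv:1106.4454 — 2 statements merged into one kernel-verified Lean document; each statement's English description precedes it below -/
import Mathlib

section
/- Let T be a tournament with vertex set V, let A' be a DESC-set of T, and let T' = T − A'. Let U be the vertex set of a strong component of T'. Then for any two vertices x, y ∈ U, the numbers of arcs of T going from x into V∖U and from y into V∖U differ by at most d*(U, V∖U), i.e., |d⁺_{V∖U}(x) − d⁺_{V∖U}(y)| ≤ d*(U, V∖U), where d⁺_{V∖U}(v) is the number of arcs of T from v to a vertex of V∖U and d*(U, V∖U) is the number of arcs of A' with one endpoint in U and the other in V∖U. -/
/-!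
Digraphs on a finite vertex type `V` are modelled by their arc sets
`D : Finset (V × V)`, where `(x, y) ∈ D` means there is an arc from `x` to `y`.
-/

namespace DescPaper

variable {V : Type*} [Fintype V] [DecidableEq V]

/-- The out-degree of `x` in the digraph `D`. -/
def outDeg (D : Finset (V × V)) (x : V) : ℕ :=
  (D.filter (fun a => a.1 = x)).card

/-- The in-degree of `x` in the digraph `D`. -/
def inDeg (D : Finset (V × V)) (x : V) : ℕ :=
  (D.filter (fun a => a.2 = x)).card

/-- The number of arcs of `D` from `x` to a vertex of `Y`. -/
def outDegInto (D : Finset (V × V)) (x : V) (Y : Finset V) : ℕ :=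
  (D.filter (fun a => a.1 = x ∧ a.2 ∈ Y)).card

/-- The subgraph of `D` induced by the vertex set `X`. -/
def induce (D : Finset (V × V)) (X : Finset V) : Finset (V × V) :=
  D.filter (fun a => a.1 ∈ X ∧ a.2 ∈ X)

/-- Reachability by a directed path in the digraph `D`. -/
def Reach (D : Finset (V × V)) : V → V → Prop :=
  Relation.ReflTransGen (fun u v => (u, v) ∈ D)

/-- The subgraph of `D` induced by `X` is strongly connected. -/
def StronglyConnectedOn (D : Finset (V × V)) (X : Finset V) : Prop :=
  ∀ x ∈ X, ∀ y ∈ X, Reach (induce D X) x y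

/-- `X` is the vertex set of a strong component of `D`:
a maximal (nonempty) vertex set inducing a strongly connected subgraph. -/
def IsStrongComponent (D : Finset (V × V)) (X : Finset V) : Prop :=
  X.Nonempty ∧ StronglyConnectedOn D X ∧
    ∀ Y : Finset V, X ⊆ Y → StronglyConnectedOn D Y → Y = X

/-- The digraph `D` is balanced: every vertex has equal in- and out-degree. -/
def IsBalanced (D : Finset (V × V)) : Prop :=
  ∀ x : V, outDeg D x = inDeg D x

/-- The subgraph of `D` induced by `X` is Eulerian:
strongly connected and balanced. -/
def EulerianOn (D : Finset (V × V)) (X : Finset V) : Prop :=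
  StronglyConnectedOn D X ∧ IsBalanced (induce D X)

/-- `A'` is a DESC-set of `D`: a set of arcs of `D` such that every strong
component of `D - A'` is Eulerian. -/
def IsDESC (D A' : Finset (V × V)) : Prop :=
  A' ⊆ D ∧ ∀ X : Finset V, IsStrongComponent (D \ A') X → EulerianOn (D \ A') X

/-- `desc D` is the minimum size of a DESC-set of `D`. -/
noncomputable def desc (D : Finset (V × V)) : ℕ :=
  sInf {n | ∃ A' : Finset (V × V), IsDESC D A' ∧ A'.card = n}

/-- `T` is a tournament: no loops, and for every pair of distinct vertices
exactly one of the two possible arcs is present. -/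
def IsTournament (T : Finset (V × V)) : Prop :=
  (∀ x : V, (x, x) ∉ T) ∧ ∀ x y : V, x ≠ y → ((x, y) ∈ T ↔ (y, x) ∉ T)

/-- `dstar A' X Y` is the number of arcs of `A'` with one endpoint in `X`
and the other endpoint in `Y` (in either direction). -/
def dstar (A' : Finset (V × V)) (X Y : Finset V) : ℕ :=
  (A'.filter (fun a => (a.1 ∈ X ∧ a.2 ∈ Y) ∨ (a.1 ∈ Y ∧ a.2 ∈ X))).card

end DescPaper

open DescPaper

/-
If `x, y ∈ U`, `z ∉ U`, and `x → z`, `z → y` are arcs of `T`, then one of them lies in `A'`: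
otherwise `U ∪ {z}` would be strongly connected in `T - A'`, against the maximality of `U`.
In a tournament every out-neighbour `z ∉ U` of `x` that is not an out-neighbour of `y`
satisfies `z → y`, so these `z` inject into the arcs of `A'` between `U` and its complement.
-/

namespace DescPaper

variable {V : Type*}

theorem IsTournament.mem_swap_of_notMem {T : Finset (V × V)} (hT : IsTournament T) {y z : V}
    (hyz : y ≠ z) (h : (y, z) ∉ T) : (z, y) ∈ T :=
  not_not.mp ((hT.2 y z hyz).not.mp h)

theorem Reach.mono {D E : Finset (V × V)} (h : D ⊆ E) {a b : V} (hab : Reach D a b) :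
    Reach E a b :=
  Relation.ReflTransGen.mono (fun _ _ huv => h huv) a b hab

variable [DecidableEq V]

theorem outDegInto_eq_card_filter (D : Finset (V × V)) (x : V) (Y : Finset V) :
    outDegInto D x Y = (Y.filter fun z => (x, z) ∈ D).card := by
  refine Finset.card_bij (fun a _ => a.2) ?_ ?_ ?_
  · intro a ha
    simp only [Finset.mem_filter] at ha
    obtain ⟨haD, rfl, haY⟩ := ha
    exact Finset.mem_filter.mpr ⟨haY, haD⟩
  · intro a ha b hb hab
    simp only [Finset.mem_filter] at ha hb
    exact Prod.ext (ha.2.1.trans hb.2.1.symm) hab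
  · intro z hz
    rw [Finset.mem_filter] at hz
    exact ⟨(x, z), by simp [hz.1, hz.2], rfl⟩

theorem induce_mono (D : Finset (V × V)) {X Y : Finset V} (h : X ⊆ Y) :
    induce D X ⊆ induce D Y :=
  Finset.monotone_filter_right D fun _ _ => And.imp (fun h1 => h h1) (fun h2 => h h2)

theorem StronglyConnectedOn.insert_of_arcs {D : Finset (V × V)} {U : Finset V}
    (hU : StronglyConnectedOn D U) {x y z : V} (hx : x ∈ U) (hy : y ∈ U)
    (hxz : (x, z) ∈ D) (hzy : (z, y) ∈ D) : StronglyConnectedOn D (insert z U) := by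
  set W := insert z U
  have reach_of_mem : ∀ a ∈ U, ∀ b ∈ U, Reach (induce D W) a b := fun a ha b hb =>
    (hU a ha b hb).mono (induce_mono D (Finset.subset_insert z U))
  have hxz' : (x, z) ∈ induce D W := by simp [W, induce, hxz, hx]
  have hzy' : (z, y) ∈ induce D W := by simp [W, induce, hzy, hy]
  intro a ha b hb
  rcases Finset.mem_insert.mp ha with rfl | haU <;> rcases Finset.mem_insert.mp hb with rfl | hbU
  · exact .refl
  · exact .head hzy' (reach_of_mem y hy b hbU)
  · exact .tail (reach_of_mem a haU x hx) hxz'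
  · exact reach_of_mem a haU b hbU

theorem IsStrongComponent.mem_of_arcs {D : Finset (V × V)} {U : Finset V}
    (hU : IsStrongComponent D U) {x y z : V} (hx : x ∈ U) (hy : y ∈ U)
    (hxz : (x, z) ∈ D) (hzy : (z, y) ∈ D) : z ∈ U := by
  rw [← hU.2.2 _ (Finset.subset_insert z U) (hU.2.1.insert_of_arcs hx hy hxz hzy)]
  exact Finset.mem_insert_self z U

section Tournament

variable {T A' : Finset (V × V)} {U Y : Finset V}

theorem card_filter_le_dstar (hT : IsTournament T) (hU : IsStrongComponent (T \ A') U)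
    (hUY : Disjoint U Y) {x y : V} (hx : x ∈ U) (hy : y ∈ U) :
    (Y.filter fun z => (x, z) ∈ T ∧ (y, z) ∉ T).card ≤ dstar A' U Y := by
  let f : V → V × V := fun z => if (x, z) ∈ A' then (x, z) else (z, y)
  let g : V × V → V := fun a => if a.1 ∈ U then a.2 else a.1
  have hzU : ∀ z ∈ Y, z ∉ U := fun z hz => Finset.disjoint_right.mp hUY hz
  refine Finset.card_le_card_of_injOn f ?_ (Set.LeftInvOn.injOn (f₁' := g) ?_)
  · intro z hz
    simp only [Finset.coe_filter, Set.mem_ofPred_eq] at hz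
    obtain ⟨hzY, hxz, hyz⟩ := hz
    have hzy : (z, y) ∈ T := hT.mem_swap_of_notMem (ne_of_mem_of_not_mem hy (hzU z hzY)) hyz
    by_cases hxzA : (x, z) ∈ A'
    · simp [f, hxzA, hx, hzY]
    · have hzyA : (z, y) ∈ A' := by
        by_contra hzyA
        exact hzU z hzY <| hU.mem_of_arcs hx hy (Finset.mem_sdiff.mpr ⟨hxz, hxzA⟩)
          (Finset.mem_sdiff.mpr ⟨hzy, hzyA⟩)
      simp [f, hxzA, hzyA, hy, hzY]
  · intro z hz
    simp only [Finset.coe_filter, Set.mem_ofPred_eq] at hz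
    by_cases hxzA : (x, z) ∈ A' <;> simp [f, g, hxzA, hx, hzU z hz.1]

theorem outDegInto_le_outDegInto_add_dstar (hT : IsTournament T)
    (hU : IsStrongComponent (T \ A') U) (hUY : Disjoint U Y) {x y : V} (hx : x ∈ U)
    (hy : y ∈ U) : outDegInto T x Y ≤ outDegInto T y Y + dstar A' U Y := by
  rw [outDegInto_eq_card_filter, outDegInto_eq_card_filter]
  calc (Y.filter fun z => (x, z) ∈ T).card
      ≤ ((Y.filter fun z => (y, z) ∈ T) ∪ Y.filter fun z => (x, z) ∈ T ∧ (y, z) ∉ T).card :=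
        Finset.card_le_card fun z => by
          simp only [Finset.mem_filter, Finset.mem_union]
          tauto
    _ ≤ _ := Finset.card_union_le _ _
    _ ≤ _ := Nat.add_le_add_left (card_filter_le_dstar hT hU hUY hx hy) _

end Tournament

end DescPaper

theorem stmt6_general {V : Type*} [Fintype V] [DecidableEq V]
    (T A' : Finset (V × V))
    (hT : IsTournament T)
    (U : Finset V) (hU : IsStrongComponent (T \ A') U) :
    ∀ x ∈ U, ∀ y ∈ U,
      |(outDegInto T x Uᶜ : ℤ) - outDegInto T y Uᶜ| ≤ dstar A' U Uᶜ := by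
  intro x hx y hy
  have hxy := outDegInto_le_outDegInto_add_dstar hT hU disjoint_compl_right hx hy
  have hyx := outDegInto_le_outDegInto_add_dstar hT hU disjoint_compl_right hy hx
  rw [abs_sub_le_iff]
  omega

theorem stmt6 {V : Type*} [Fintype V] [DecidableEq V]
    (T A' : Finset (V × V))
    (hT : IsTournament T) (hDESC : IsDESC T A')
    (U : Finset V) (hU : IsStrongComponent (T \ A') U) :
    ∀ x ∈ U, ∀ y ∈ U,
      |(outDegInto T x Uᶜ : ℤ) - outDegInto T y Uᶜ| ≤ dstar A' U Uᶜ :=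
  stmt6_general T A' hT U hU
end

section
/- Let T be a tournament on a finite vertex set, let k be a nonnegative integer, let A' be a DESC-set of T with |A'| ≤ k, and let T' = T − A'. Suppose X is a set of vertices of T with |X| ≥ 4k + 3 such that max_{x∈X} d⁺_T(x) − min_{x∈X} d⁺_T(x) ≤ k, and such that every vertex v ∉ X satisfies either d⁺_T(v) > min_{x∈X} d⁺_T(x) + k or d⁺_T(v) < max_{x∈X} d⁺_T(x) − k. Then X is exactly the vertex set of one strong component of T'. -/
open DescPaper

/-!
Write `T' = T - A'`. For a vertex `x`, let `C(x)` be its strong component in `T'` and `B(x)` the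
set of vertices that cannot reach `x` in `T'`. Inside `C(x)` the digraph `T'` is balanced, `x`
sends a `T'`-arc to no vertex above `C(x)` and receives none from `B(x)`; counting the tournament
arcs at `x` therefore gives `2 d⁺(x) + 1 = |C(x)| + 2 |B(x)|`, up to an error of at most twice
the number of arcs of `A'` at `x`, and exactly when `x` is clean (incident with no arc of `A'`).
Hence out-degrees within one component differ by at most `|A'|`, and if `C(x)` lies strictly
above `C(y)` then `B(x) ⊇ B(y) ∪ C(y)`, so `d⁺(x)` exceeds `d⁺(y)` by about `(|C(x)| + |C(y)|)/2`.

At least `2k + 3` vertices of `X` are clean. Comparing a clean vertex of maximum degree with one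
of minimum degree shows that all clean vertices of `X` lie in one component `C`; each of the at
most `2k` other vertices of `X` outside `C` would need many arcs of `A'`, so `X ⊆ C`; and the
degree gap of the vertices outside `X` keeps them out of `C`.
-/

namespace DescPaper

open Finset

lemma add_eq_zero_of_mul_le {k c p q : ℕ} (hn : p + q ≤ 2 * k) (hc : 4 * k + 3 ≤ p + q + c)
    (hp : p * (c + 1) ≤ p * (2 * k) + 2 * k) (hq : q * (c + 1) ≤ q * (2 * k) + 2 * k) :
    p + q = 0 := by
  have key : ∀ m, 1 ≤ m → p + q ≤ 2 * m → ¬ m * (c + 1) ≤ m * (2 * k) + 2 * k := by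
    intro m hm hmn h
    rcases le_or_gt m (k + 1) with hmk | hmk
    · nlinarith [Nat.mul_le_mul_left m hc, Nat.mul_le_mul_left m hmn,
        Nat.mul_le_mul hm (Nat.sub_le_sub_left hmk (k + 2))]
    · nlinarith [Nat.mul_le_mul_left m hc]
  by_contra h0
  rcases le_total q p with hqp | hpq
  · exact key p (by omega) (by omega) hp
  · exact key q (by omega) (by omega) hq

section Reachability

variable {V : Type*} {D : Finset (V × V)} {x y z : V}

lemma Reach.trans (hxy : Reach D x y) (hyz : Reach D y z) : Reach D x z :=
  Relation.ReflTransGen.trans hxy hyz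

lemma reach_of_mem (h : (x, y) ∈ D) : Reach D x y :=
  Relation.ReflTransGen.single h

lemma reach_of_reach_induce [DecidableEq V] {S : Finset V} (h : Reach (induce D S) x y) :
    Reach D x y :=
  Relation.ReflTransGen.mono (fun _ _ h => (mem_filter.1 h).1) _ _ h

end Reachability

lemma card_inter_add_card_inter_le {V : Type*} [DecidableEq V] {C U : Finset V}
    (h : Disjoint C U) (s : Finset V) : #(C ∩ s) + #(U ∩ s) ≤ #s := by
  rw [← card_union_of_disjoint (h.mono inter_subset_left inter_subset_left),
    ← union_inter_distrib_right]
  exact card_le_card inter_subset_right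

section Components

variable {V : Type*} [Fintype V] (D : Finset (V × V))

open Classical in
noncomputable def comp (x : V) : Finset V := {y | Reach D x y ∧ Reach D y x}

open Classical in
noncomputable def below (x : V) : Finset V := {y | ¬ Reach D y x}

variable {D}

@[simp] lemma mem_comp {x y : V} : y ∈ comp D x ↔ Reach D x y ∧ Reach D y x := by
  classical simp [comp]

@[simp] lemma mem_below {x y : V} : y ∈ below D x ↔ ¬ Reach D y x := by
  classical simp [below]

lemma self_mem_comp (x : V) : x ∈ comp D x :=
  mem_comp.2 ⟨Relation.ReflTransGen.refl, Relation.ReflTransGen.refl⟩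

lemma comp_eq_of_mem {x y : V} (h : y ∈ comp D x) : comp D y = comp D x := by
  obtain ⟨hxy, hyx⟩ := mem_comp.1 h
  ext z
  simp only [mem_comp]
  exact ⟨fun ⟨h1, h2⟩ => ⟨hxy.trans h1, h2.trans hyx⟩,
    fun ⟨h1, h2⟩ => ⟨hyx.trans h1, h2.trans hxy⟩⟩

lemma below_eq_of_mem_comp {x y : V} (h : y ∈ comp D x) : below D y = below D x := by
  obtain ⟨hxy, hyx⟩ := mem_comp.1 h
  ext z
  simp only [mem_below]
  exact ⟨fun h1 h2 => h1 (h2.trans hxy), fun h1 h2 => h1 (h2.trans hyx)⟩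

lemma disjoint_comp_below (x : V) : Disjoint (comp D x) (below D x) :=
  disjoint_left.2 fun _ hy hy' => mem_below.1 hy' (mem_comp.1 hy).2

variable [DecidableEq V]

-- Every vertex on a path from `x` to `y` reaches `x` through `y`, so it lies in `comp D x`.
lemma reach_induce_comp_of_reach {x y : V} (hxy : Reach D x y) (hyx : Reach D y x) :
    Reach (induce D (comp D x)) x y ∧ Reach (induce D (comp D x)) y x := by
  have arc : ∀ {v w}, v ∈ comp D x → w ∈ comp D x → (v, w) ∈ D →
      Reach (induce D (comp D x)) v w := fun hv hw h =>
    reach_of_mem (mem_filter.2 ⟨h, hv, hw⟩)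
  constructor
  · induction hxy with
    | refl => exact Relation.ReflTransGen.refl
    | tail hxw hwy ih =>
      have hwx : Reach D _ x := (reach_of_mem hwy).trans hyx
      exact (ih hwx).trans (arc (mem_comp.2 ⟨hxw, hwx⟩) (mem_comp.2 ⟨hxw.tail hwy, hyx⟩) hwy)
  · induction hyx using Relation.ReflTransGen.head_induction_on with
    | refl => exact Relation.ReflTransGen.refl
    | head hyw hwx ih =>
      have hxw : Reach D x _ := hxy.trans (reach_of_mem hyw)
      exact (arc (mem_comp.2 ⟨hxy, Relation.ReflTransGen.head hyw hwx⟩)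
        (mem_comp.2 ⟨hxw, hwx⟩) hyw).trans (ih hxw)

lemma isStrongComponent_comp (x : V) : IsStrongComponent D (comp D x) := by
  refine ⟨⟨x, self_mem_comp x⟩, fun y hy z hz => ?_, fun Y hY hYsc => ?_⟩
  · exact (reach_induce_comp_of_reach (mem_comp.1 hy).1 (mem_comp.1 hy).2).2.trans
      (reach_induce_comp_of_reach (mem_comp.1 hz).1 (mem_comp.1 hz).2).1
  · refine subset_antisymm (fun y hy => mem_comp.2 ⟨?_, ?_⟩) hY
    · exact reach_of_reach_induce (hYsc x (hY (self_mem_comp x)) y hy)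
    · exact reach_of_reach_induce (hYsc y hy x (hY (self_mem_comp x)))

lemma not_reach_of_mem_compl {x y : V} (hy : y ∈ (comp D x ∪ below D x)ᶜ) : ¬ Reach D x y := by
  simp only [mem_compl, mem_union, mem_comp, mem_below, not_or, not_not] at hy
  exact fun h => hy.1 ⟨h, hy.2⟩

lemma card_below_add_card_comp_le {x y : V} (hxy : Reach D x y) (hyx : ¬ Reach D y x) :
    #(below D y) + #(comp D y) ≤ #(below D x) := by
  rw [← card_union_of_disjoint (disjoint_comp_below y).symm]
  refine card_le_card fun z hz => mem_below.2 fun hzx => ?_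
  rcases mem_union.1 hz with hz | hz
  · exact mem_below.1 hz (hzx.trans hxy)
  · exact hyx ((mem_comp.1 hz).1.trans hzx)

end Components

section Neighbours

variable {V : Type*} [Fintype V] [DecidableEq V]

def outNbrs (D : Finset (V × V)) (x : V) : Finset V := {y | (x, y) ∈ D}

def inNbrs (D : Finset (V × V)) (x : V) : Finset V := {y | (y, x) ∈ D}

@[simp] lemma mem_outNbrs {D : Finset (V × V)} {x y : V} : y ∈ outNbrs D x ↔ (x, y) ∈ D := by
  simp [outNbrs]

@[simp] lemma mem_inNbrs {D : Finset (V × V)} {x y : V} : y ∈ inNbrs D x ↔ (y, x) ∈ D := by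
  simp [inNbrs]

lemma card_inter_outNbrs (D : Finset (V × V)) (x : V) (S : Finset V) :
    #(S ∩ outNbrs D x) = #{a ∈ D | a.1 = x ∧ a.2 ∈ S} := by
  refine card_nbij' (Prod.mk x) Prod.snd ?_ ?_ ?_ ?_ <;> intro a <;> aesop

lemma card_inter_inNbrs (D : Finset (V × V)) (x : V) (S : Finset V) :
    #(S ∩ inNbrs D x) = #{a ∈ D | a.2 = x ∧ a.1 ∈ S} := by
  refine card_nbij' (fun y => (y, x)) Prod.fst ?_ ?_ ?_ ?_ <;> intro a <;> aesop

lemma outDeg_eq_card_outNbrs (D : Finset (V × V)) (x : V) : outDeg D x = #(outNbrs D x) := by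
  simpa [outDeg] using (card_inter_outNbrs D x univ).symm

lemma inDeg_eq_card_inNbrs (D : Finset (V × V)) (x : V) : inDeg D x = #(inNbrs D x) := by
  simpa [inDeg] using (card_inter_inNbrs D x univ).symm

lemma sum_outDeg_le_card (D : Finset (V × V)) (S : Finset V) : ∑ x ∈ S, outDeg D x ≤ #D := by
  rw [card_eq_sum_card_fiberwise (f := Prod.fst) (t := univ) (fun _ _ => mem_univ _)]
  exact sum_le_sum_of_subset (subset_univ S)

lemma sum_inDeg_le_card (D : Finset (V × V)) (S : Finset V) : ∑ x ∈ S, inDeg D x ≤ #D := by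
  rw [card_eq_sum_card_fiberwise (f := Prod.snd) (t := univ) (fun _ _ => mem_univ _)]
  exact sum_le_sum_of_subset (subset_univ S)

lemma notMem_of_outDeg_eq_zero {D : Finset (V × V)} {x : V} (h : outDeg D x = 0) (y : V) :
    (x, y) ∉ D := by
  rw [outDeg_eq_card_outNbrs, card_eq_zero] at h
  simpa using eq_empty_iff_forall_notMem.1 h y

lemma notMem_of_inDeg_eq_zero {D : Finset (V × V)} {x : V} (h : inDeg D x = 0) (y : V) :
    (y, x) ∉ D := by
  rw [inDeg_eq_card_inNbrs, card_eq_zero] at h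
  simpa using eq_empty_iff_forall_notMem.1 h y

lemma card_inter_outNbrs_sdiff {D A : Finset (V × V)} (hA : A ⊆ D) (x : V) (S : Finset V) :
    #(S ∩ outNbrs D x) = #(S ∩ outNbrs (D \ A) x) + #(S ∩ outNbrs A x) := by
  rw [← card_union_of_disjoint]
  · congr 1; ext y; simp only [mem_inter, mem_union, mem_outNbrs, mem_sdiff]; grind
  · exact disjoint_left.2 fun y h h' => by simp_all

lemma card_inter_inNbrs_sdiff {D A : Finset (V × V)} (hA : A ⊆ D) (x : V) (S : Finset V) :
    #(S ∩ inNbrs D x) = #(S ∩ inNbrs (D \ A) x) + #(S ∩ inNbrs A x) := by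
  rw [← card_union_of_disjoint]
  · congr 1; ext y; simp only [mem_inter, mem_union, mem_inNbrs, mem_sdiff]; grind
  · exact disjoint_left.2 fun y h h' => by simp_all

lemma outDeg_induce (D : Finset (V × V)) {C : Finset V} {x : V} (hx : x ∈ C) :
    outDeg (induce D C) x = #(C ∩ outNbrs D x) := by
  rw [outDeg_eq_card_outNbrs]; congr 1; ext y; simp [induce, hx, and_comm]

lemma inDeg_induce (D : Finset (V × V)) {C : Finset V} {x : V} (hx : x ∈ C) :
    inDeg (induce D C) x = #(C ∩ inNbrs D x) := by
  rw [inDeg_eq_card_inNbrs]; congr 1; ext y; simp [induce, hx, and_comm]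

lemma card_eq_card_inter_add_add {C B : Finset V} (h : Disjoint C B) (s : Finset V) :
    #s = #(C ∩ s) + #(B ∩ s) + #((C ∪ B)ᶜ ∩ s) := by
  rw [← card_union_of_disjoint (h.mono inter_subset_left inter_subset_left),
    ← union_inter_distrib_right, ← card_union_of_disjoint, ← union_inter_distrib_right,
    union_compl, univ_inter]
  · exact (disjoint_compl_right (a := C ∪ B)).mono inter_subset_left inter_subset_left

lemma weighted_card_inter_nbrs_le (A : Finset (V × V)) {C S R : Finset V} {u v : V}
    (hu : u ∈ C) (hv : v ∈ C) (hS : Disjoint C S) (hR : Disjoint C R) :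
    #(C ∩ outNbrs A u) + 2 * #(S ∩ outNbrs A u) + #(C ∩ inNbrs A v) + 2 * #(R ∩ inNbrs A v)
      ≤ 2 * #A := by
  simp only [card_inter_outNbrs, card_inter_inNbrs, card_filter, mul_sum, ← sum_add_distrib]
  calc _ ≤ ∑ _a ∈ A, 2 := sum_le_sum fun a _ => ?_
    _ = 2 * #A := by rw [sum_const, smul_eq_mul, mul_comm]
  -- only the arc `(u, v)` can be counted on both sides, and then with weight `1 + 1`
  have := disjoint_left.1 hS
  have := disjoint_left.1 hR
  split_ifs <;> grind

lemma card_filter_ne_zero_le (A : Finset (V × V)) (X : Finset V) :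
    #{x ∈ X | outDeg A x + inDeg A x ≠ 0} ≤ 2 * #A := by
  have hpos := card_nsmul_le_sum {x ∈ X | outDeg A x + inDeg A x ≠ 0}
    (fun x => outDeg A x + inDeg A x) 1 fun x hx => Nat.one_le_iff_ne_zero.2 (mem_filter.1 hx).2
  have hsub : ∑ x ∈ X with outDeg A x + inDeg A x ≠ 0, (outDeg A x + inDeg A x)
      ≤ ∑ x ∈ X, outDeg A x + ∑ x ∈ X, inDeg A x :=
    (sum_le_sum_of_subset (filter_subset _ X)).trans_eq sum_add_distrib
  have := sum_outDeg_le_card A X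
  have := sum_inDeg_le_card A X
  rw [smul_eq_mul, mul_one] at hpos
  omega

lemma IsTournament.card_inter_outNbrs_add_card_inter_inNbrs {T : Finset (V × V)}
    (hT : IsTournament T) (x : V) (S : Finset V) :
    #(S ∩ outNbrs T x) + #(S ∩ inNbrs T x) = #(S.erase x) := by
  rw [← card_union_of_disjoint]
  · congr 1; ext y
    simp only [mem_union, mem_inter, mem_outNbrs, mem_inNbrs, mem_erase]
    have h1 := hT.1 x
    have h2 := hT.2 x y
    grind
  · refine disjoint_left.2 fun y h h' => ?_
    simp only [mem_inter, mem_outNbrs, mem_inNbrs] at h h'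
    have hxy : x ≠ y := by rintro rfl; exact hT.1 x h.2
    exact (hT.2 x y hxy).1 h.2 h'.2

lemma IsTournament.reach_or_reach {T A : Finset (V × V)} (hT : IsTournament T) {x : V}
    (hout : outDeg A x = 0) (hin : inDeg A x = 0) (y : V) :
    Reach (T \ A) x y ∨ Reach (T \ A) y x := by
  by_cases hxy : x = y
  · exact Or.inl (hxy ▸ Relation.ReflTransGen.refl)
  by_cases h : (x, y) ∈ T
  · exact Or.inl (reach_of_mem (mem_sdiff.2 ⟨h, notMem_of_outDeg_eq_zero hout y⟩))
  · exact Or.inr (reach_of_mem (mem_sdiff.2 ⟨(hT.2 y x (Ne.symm hxy)).2 h,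
      notMem_of_inDeg_eq_zero hin y⟩))

end Neighbours

section DESC

variable {V : Type*} [Fintype V] [DecidableEq V] {T A : Finset (V × V)}

-- `(comp ∪ below)ᶜ` consists of the vertices that reach `x` in `T \ A` without being reached
-- from it: `x` sends no `(T \ A)`-arc into this set and receives none from `below`.
theorem two_mul_outDeg_add_one (hT : IsTournament T) (hA : IsDESC T A) (x : V) :
    2 * outDeg T x + 1 + #(comp (T \ A) x ∩ inNbrs A x) + 2 * #(below (T \ A) x ∩ inNbrs A x)
      = #(comp (T \ A) x) + 2 * #(below (T \ A) x) + #(comp (T \ A) x ∩ outNbrs A x)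
        + 2 * #((comp (T \ A) x ∪ below (T \ A) x)ᶜ ∩ outNbrs A x) := by
  set C := comp (T \ A) x
  set B := below (T \ A) x
  have hx : x ∈ C := self_mem_comp x
  have hxB : x ∉ B := disjoint_left.1 (disjoint_comp_below x) hx
  have balanced : #(C ∩ outNbrs (T \ A) x) = #(C ∩ inNbrs (T \ A) x) := by
    rw [← outDeg_induce _ hx, ← inDeg_induce _ hx]
    exact (hA.2 C (isStrongComponent_comp x)).2 x
  have no_in_from_below : #(B ∩ inNbrs (T \ A) x) = 0 :=
    card_eq_zero.2 <| eq_empty_of_forall_notMem fun y hy =>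
      mem_below.1 (mem_inter.1 hy).1 (reach_of_mem (mem_inNbrs.1 (mem_inter.1 hy).2))
  have no_out_upwards : #((C ∪ B)ᶜ ∩ outNbrs (T \ A) x) = 0 :=
    card_eq_zero.2 <| eq_empty_of_forall_notMem fun y hy =>
      not_reach_of_mem_compl (mem_inter.1 hy).1 (reach_of_mem (mem_outNbrs.1 (mem_inter.1 hy).2))
  have hC := hT.card_inter_outNbrs_add_card_inter_inNbrs x C
  have hB := hT.card_inter_outNbrs_add_card_inter_inNbrs x B
  rw [erase_eq_of_notMem hxB] at hB
  have hCx := card_erase_add_one hx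
  have split := card_eq_card_inter_add_add (C := C) (B := B) (disjoint_comp_below x) (outNbrs T x)
  have := card_inter_outNbrs_sdiff hA.1 x C
  have := card_inter_inNbrs_sdiff hA.1 x C
  have := card_inter_inNbrs_sdiff hA.1 x B
  have := card_inter_outNbrs_sdiff hA.1 x (C ∪ B)ᶜ
  rw [outDeg_eq_card_outNbrs]
  omega

theorem two_mul_outDeg_add_one_le (hT : IsTournament T) (hA : IsDESC T A) (x : V) :
    2 * outDeg T x + 1 ≤ #(comp (T \ A) x) + 2 * #(below (T \ A) x) + 2 * outDeg A x := by
  have := two_mul_outDeg_add_one hT hA x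
  have := card_inter_add_card_inter_le
    ((disjoint_compl_right (a := comp (T \ A) x ∪ below (T \ A) x)).mono_left subset_union_left)
    (outNbrs A x)
  rw [outDeg_eq_card_outNbrs A]
  omega

theorem card_comp_add_two_mul_card_below_le (hT : IsTournament T) (hA : IsDESC T A) (x : V) :
    #(comp (T \ A) x) + 2 * #(below (T \ A) x) ≤ 2 * outDeg T x + 1 + 2 * inDeg A x := by
  have := two_mul_outDeg_add_one hT hA x
  have := card_inter_add_card_inter_le (disjoint_comp_below (D := T \ A) x) (inNbrs A x)
  rw [inDeg_eq_card_inNbrs]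
  omega

theorem two_mul_outDeg_add_card_comp_add_card_comp_le (hT : IsTournament T) (hA : IsDESC T A)
    {x y : V} (hxy : Reach (T \ A) x y) (hyx : ¬ Reach (T \ A) y x) :
    2 * outDeg T y + #(comp (T \ A) x) + #(comp (T \ A) y)
      ≤ 2 * outDeg T x + 2 * outDeg A y + 2 * inDeg A x := by
  have := two_mul_outDeg_add_one_le hT hA y
  have := card_comp_add_two_mul_card_below_le hT hA x
  have := card_below_add_card_comp_le hxy hyx
  omega

theorem outDeg_lt_outDeg_of_reach (hT : IsTournament T) (hA : IsDESC T A) {x y : V}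
    (hxy : Reach (T \ A) x y) (hyx : ¬ Reach (T \ A) y x) (hy : outDeg A y = 0)
    (hx : inDeg A x = 0) : outDeg T y < outDeg T x := by
  have := two_mul_outDeg_add_card_comp_add_card_comp_le hT hA hxy hyx
  have := card_pos.2 ⟨x, self_mem_comp (D := T \ A) x⟩
  omega

theorem outDeg_le_outDeg_add_card (hT : IsTournament T) (hA : IsDESC T A) {w u v : V}
    (hu : u ∈ comp (T \ A) w) (hv : v ∈ comp (T \ A) w) : outDeg T u ≤ outDeg T v + #A := by
  have hv' : v ∈ comp (T \ A) u := by rwa [comp_eq_of_mem hu]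
  have hu' := two_mul_outDeg_add_one hT hA u
  have hv'' := two_mul_outDeg_add_one hT hA v
  rw [comp_eq_of_mem hv', below_eq_of_mem_comp hv'] at hv''
  have := weighted_card_inter_nbrs_le A (self_mem_comp u) hv'
    (S := (comp (T \ A) u ∪ below (T \ A) u)ᶜ) (disjoint_compl_right.mono_left subset_union_left)
    (disjoint_comp_below u)
  omega

theorem comp_subset_of_far (hT : IsTournament T) (hA : IsDESC T A) {X : Finset V} {u : V}
    (hXu : X ⊆ comp (T \ A) u)
    (hfar : ∀ v ∉ X, ∃ x ∈ X, outDeg T x + #A < outDeg T v ∨ outDeg T v + #A < outDeg T x) :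
    comp (T \ A) u ⊆ X := by
  intro v hv
  by_contra hvX
  obtain ⟨x, hx, hvx⟩ := hfar v hvX
  have := outDeg_le_outDeg_add_card hT hA hv (hXu hx)
  have := outDeg_le_outDeg_add_card hT hA (hXu hx) hv
  omega

theorem two_mul_outDeg_add_card_le_of_forall_between (hT : IsTournament T) (hA : IsDESC T A)
    {u u' : V} (hu : inDeg A u = 0) (hu' : outDeg A u' = 0) (huu' : Reach (T \ A) u u')
    (hu'u : ¬ Reach (T \ A) u' u) {S : Finset V}
    (hS : ∀ y ∈ S, ¬ Reach (T \ A) y u ∧ Reach (T \ A) y u') :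
    2 * outDeg T u' + #(comp (T \ A) u) + #S ≤ 2 * outDeg T u := by
  have hbelow : #(below (T \ A) u') + #S ≤ #(below (T \ A) u) := by
    rw [← card_union_of_disjoint (disjoint_right.2 fun y hy hy' => mem_below.1 hy' (hS y hy).2)]
    refine card_le_card (union_subset (fun z hz => mem_below.2 fun hzu => ?_)
      fun y hy => mem_below.2 (hS y hy).1)
    exact mem_below.1 hz (hzu.trans huu')
  have := two_mul_outDeg_add_card_comp_add_card_comp_le hT hA huu' hu'u
  have := two_mul_outDeg_add_one_le hT hA u'
  have := card_comp_add_two_mul_card_below_le hT hA u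
  omega

theorem exists_subset_comp_of_clean (hT : IsTournament T) (hA : IsDESC T A) {S : Finset V}
    {k : ℕ} (hclean : ∀ x ∈ S, outDeg A x = 0 ∧ inDeg A x = 0)
    (hwin : ∀ x ∈ S, ∀ y ∈ S, outDeg T x ≤ outDeg T y + k) (hcard : 2 * k < #S) :
    ∃ u ∈ S, S ⊆ comp (T \ A) u := by
  have hne : S.Nonempty := card_pos.1 (by omega)
  obtain ⟨u, hu, hmax⟩ := exists_max_image S (outDeg T) hne
  obtain ⟨u', hu', hmin⟩ := exists_min_image S (outDeg T) hne
  have reach_of_reach_u : ∀ y ∈ S, Reach (T \ A) y u → Reach (T \ A) u y := fun y hy hyu =>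
    by_contra fun h => (outDeg_lt_outDeg_of_reach hT hA hyu h (hclean u hu).1
      (hclean y hy).2).not_ge (hmax y hy)
  have reach_u' : ∀ y ∈ S, Reach (T \ A) y u' := fun y hy => by_contra fun h =>
    (outDeg_lt_outDeg_of_reach hT hA (((hT.reach_or_reach (hclean y hy).1 (hclean y hy).2
      u').resolve_left h)) h (hclean y hy).1 (hclean u' hu').2).not_ge (hmin y hy)
  -- Otherwise every clean vertex outside `comp u` lies strictly between `u` and `u'`, and
  -- these push the degree of `u` too far above that of `u'`.
  have hu'u : Reach (T \ A) u' u := by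
    by_contra hu'u
    have := two_mul_outDeg_add_card_le_of_forall_between hT hA (hclean u hu).2
      (hclean u' hu').1 (reach_u' u hu) hu'u (S := S \ comp (T \ A) u) fun y hy =>
      ⟨fun hyu => (mem_sdiff.1 hy).2
        (mem_comp.2 ⟨reach_of_reach_u y (mem_sdiff.1 hy).1 hyu, hyu⟩),
        reach_u' y (mem_sdiff.1 hy).1⟩
    have := card_le_card_sdiff_add_card (s := S) (t := comp (T \ A) u)
    have := hwin u hu u' hu'
    omega
  refine ⟨u, hu, fun y hy => ?_⟩
  have hyu := (reach_u' y hy).trans hu'u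
  exact mem_comp.2 ⟨reach_of_reach_u y hy hyu, hyu⟩

theorem subset_comp_of_window (hT : IsTournament T) (hA : IsDESC T A) {X : Finset V} {u : V}
    {k : ℕ} (huo : outDeg A u = 0) (hui : inDeg A u = 0) (hk : #A ≤ k)
    (hwin : ∀ x ∈ X, outDeg T u ≤ outDeg T x + k ∧ outDeg T x ≤ outDeg T u + k)
    (hout : #(X \ comp (T \ A) u) ≤ 2 * k) (hX : 4 * k + 3 ≤ #X) : X ⊆ comp (T \ A) u := by
  classical
  set P := (X \ comp (T \ A) u).filter (Reach (T \ A) u)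
  set Q := (X \ comp (T \ A) u).filter (fun x => ¬ Reach (T \ A) u x)
  have hPQ : #P + #Q = #(X \ comp (T \ A) u) := card_filter_add_card_filter_not _
  have hXC : #X ≤ #(X \ comp (T \ A) u) + #(comp (T \ A) u) := card_le_card_sdiff_add_card
  have mem_P : ∀ x ∈ P, #(comp (T \ A) u) + 1 ≤ 2 * k + 2 * outDeg A x := fun x hx => by
    obtain ⟨hx, hux⟩ := mem_filter.1 hx
    have hxu : ¬ Reach (T \ A) x u := fun hxu => (mem_sdiff.1 hx).2 (mem_comp.2 ⟨hux, hxu⟩)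
    have := two_mul_outDeg_add_card_comp_add_card_comp_le hT hA hux hxu
    have := card_pos.2 ⟨x, self_mem_comp (D := T \ A) x⟩
    have := hwin x (mem_sdiff.1 hx).1
    omega
  have mem_Q : ∀ x ∈ Q, #(comp (T \ A) u) + 1 ≤ 2 * k + 2 * inDeg A x := fun x hx => by
    obtain ⟨hx, hux⟩ := mem_filter.1 hx
    have hxu := (hT.reach_or_reach huo hui x).resolve_left hux
    have := two_mul_outDeg_add_card_comp_add_card_comp_le hT hA hxu hux
    have := card_pos.2 ⟨x, self_mem_comp (D := T \ A) x⟩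
    have := hwin x (mem_sdiff.1 hx).1
    omega
  have hP := card_nsmul_le_sum P _ _ mem_P
  have hQ := card_nsmul_le_sum Q _ _ mem_Q
  simp only [sum_add_distrib, sum_const, ← mul_sum, smul_eq_mul] at hP hQ
  have := sum_outDeg_le_card A P
  have := sum_inDeg_le_card A Q
  have hempty := add_eq_zero_of_mul_le (k := k) (p := #P) (q := #Q) (c := #(comp (T \ A) u))
    (by omega) (by omega) (by linarith) (by linarith)
  rw [hPQ, card_eq_zero, sdiff_eq_empty_iff_subset] at hempty
  exact hempty

theorem isStrongComponent_of_window (hT : IsTournament T) (hA : IsDESC T A) {X : Finset V}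
    {k : ℕ} (hk : #A ≤ k) (hX : 4 * k + 3 ≤ #X)
    (hwin : ∀ x ∈ X, ∀ y ∈ X, outDeg T x ≤ outDeg T y + k)
    (hfar : ∀ v ∉ X, ∃ x ∈ X, outDeg T x + k < outDeg T v ∨ outDeg T v + k < outDeg T x) :
    IsStrongComponent (T \ A) X := by
  set S := {x ∈ X | outDeg A x + inDeg A x = 0}
  have hdirty := card_filter_ne_zero_le A X
  have hsplit : #S + #{x ∈ X | outDeg A x + inDeg A x ≠ 0} = #X :=
    card_filter_add_card_filter_not _
  obtain ⟨u, hu, hSu⟩ := exists_subset_comp_of_clean hT hA (S := S) (k := k)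
    (fun x hx => by have := (mem_filter.1 hx).2; omega)
    (fun x hx y hy => hwin x (mem_filter.1 hx).1 y (mem_filter.1 hy).1) (by omega)
  obtain ⟨huX, hu0⟩ := mem_filter.1 hu
  have hXu : X ⊆ comp (T \ A) u := by
    refine subset_comp_of_window hT hA (by omega) (by omega) hk
      (fun x hx => ⟨hwin u huX x hx, hwin x hx u huX⟩) ?_ (by omega)
    refine (card_le_card fun x hx => ?_).trans (hdirty.trans (by omega))
    obtain ⟨hxX, hxu⟩ := mem_sdiff.1 hx
    exact mem_filter.2 ⟨hxX, fun h => hxu (hSu (mem_filter.2 ⟨hxX, h⟩))⟩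
  have hfar' : ∀ v ∉ X, ∃ x ∈ X, outDeg T x + #A < outDeg T v ∨ outDeg T v + #A < outDeg T x :=
    fun v hv => (hfar v hv).imp fun x ⟨hx, h⟩ => ⟨hx, by omega⟩
  rw [← subset_antisymm (comp_subset_of_far hT hA hXu hfar') hXu]
  exact isStrongComponent_comp u

end DESC

end DescPaper

theorem stmt11 {V : Type*} [Fintype V] [DecidableEq V]
    (T A' : Finset (V × V)) (k : ℕ)
    (hT : IsTournament T) (hDESC : IsDESC T A') (hk : A'.card ≤ k)
    (X : Finset V) (hXne : X.Nonempty) (hcard : 4 * k + 3 ≤ X.card)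
    (hdeg : ((X.image fun x => (outDeg T x : ℤ)).max' (hXne.image _))
              - ((X.image fun x => (outDeg T x : ℤ)).min' (hXne.image _)) ≤ k)
    (hout : ∀ v : V, v ∉ X →
      ((X.image fun x => (outDeg T x : ℤ)).min' (hXne.image _)) + k < (outDeg T v : ℤ) ∨
      (outDeg T v : ℤ) < ((X.image fun x => (outDeg T x : ℤ)).max' (hXne.image _)) - k) :
    IsStrongComponent (T \ A') X := by
  obtain ⟨xmin, hxmin, hmin⟩ :=
    Finset.mem_image.1 (Finset.min'_mem _ (hXne.image fun x => (outDeg T x : ℤ)))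
  obtain ⟨xmax, hxmax, hmax⟩ :=
    Finset.mem_image.1 (Finset.max'_mem _ (hXne.image fun x => (outDeg T x : ℤ)))
  refine isStrongComponent_of_window hT hDESC hk hcard (fun x hx y hy => ?_) fun v hv => ?_
  · have := Finset.le_max' _ _ (Finset.mem_image_of_mem (fun x => (outDeg T x : ℤ)) hx)
    have := Finset.min'_le _ _ (Finset.mem_image_of_mem (fun x => (outDeg T x : ℤ)) hy)
    omega
  · rcases hout v hv with h | h
    · exact ⟨xmin, hxmin, Or.inl (by omega)⟩
    · exact ⟨xmax, hxmax, Or.inr (by omega)⟩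
end
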